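/- For any integer m ≥ 2, define the hook length polynomial 𝓗_{n,m}(x) = Σ_{T ∈ 𝒯_{n,m}} ∏_{v ∈ 𝓘(T)} ((m·𝓗_v − 1)x − 𝓗_v + 1)/((m−1)·𝓗_v), with 𝓗_{0,m}(x) = 1. Then for every n ≥ 1, 𝓗_{n,m}(x) = Σ_{i_1 + i_2 + ⋯ + i_m = n−1} ( (mx−1)/(m−1) + (1−x)/((m−1)(i_1 + i_2 + ⋯ + i_{m−1} + 1)) ) · ∏_{j=1}^{m} 𝓗_{i_j,m}(x), where the sum is over all m-tuples of nonnegative integers (i_1,…,i_m) summing to n−1. -/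

import Mathlib

open Polynomial Finset

/-- A complete `m`-ary tree: a `leaf` is an external vertex and a `node`
has exactly `m` linearly ordered subtrees. -/
inductive MTree (m : ℕ) : Type
  | leaf : MTree m
  | node : (Fin m → MTree m) → MTree m

namespace MTree

/-- The number of internal vertices of a complete `m`-ary tree. -/
def internals {m : ℕ} : MTree m → ℕ
  | leaf => 0
  | node c => 1 + ∑ i, (c i).internals

/-- The first kind of hook length of the root of `node c`: one plus the number of
internal vertices of all subtrees except the rightmost one. -/
def hook1 {m : ℕ} (c : Fin m → MTree m) : ℕ :=
  1 + ∑ i ∈ Finset.univ.filter (fun i : Fin m => (i : ℕ) + 1 < m), (c i).internals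

/-- The product of `f (𝓗_v)` over all internal vertices `v` of a complete `m`-ary
tree, where `𝓗_v` is the first kind of hook length. -/
def hookProd1 {m : ℕ} {R : Type*} [CommSemiring R] (f : ℕ → R) : MTree m → R
  | leaf => 1
  | node c => f (hook1 c) * ∏ i, hookProd1 f (c i)

/-- The number of internal vertices of the `(m+1-|S|)`-ary tree `T^S` obtained from a
complete `(m+1)`-ary tree `T` by recursively deleting, for every `r ∈ S ⊆ [m]`,
the `r`-th subtree of every remaining internal vertex (the label `r ∈ {1,…,m}`
corresponds to the child with index `r - 1`, i.e. to `Fin.castSucc` of `Fin m`). -/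
def internalsS {m : ℕ} (S : Finset (Fin m)) : MTree (m + 1) → ℕ
  | leaf => 0
  | node c => 1 + ∑ i ∈ (S.image Fin.castSucc)ᶜ, internalsS S (c i)

/-- The product of `f (ℍ_v^S)` over all internal vertices `v` of a complete
`(m+1)`-ary tree, where `ℍ_v^S` is the second kind of hook length. -/
def hookProdS {m : ℕ} {R : Type*} [CommSemiring R] (S : Finset (Fin m)) (f : ℕ → R) :
    MTree (m + 1) → R
  | leaf => 1
  | node c => f (internalsS S (node c)) * ∏ i, hookProdS S f (c i)

end MTree

/-- The hook length polynomial
`𝓗_{n,m}(x) = Σ_{T ∈ 𝒯_{n,m}} ∏_{v ∈ 𝓘(T)} ((m𝓗_v - 1)x - 𝓗_v + 1)/((m-1)𝓗_v)`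
(for `n = 0` the only tree is the single external vertex, so `𝓗_{0,m}(x) = 1`). -/
noncomputable def hookPoly (m n : ℕ) : Polynomial ℚ :=
  ∑ᶠ T ∈ {T : MTree m | T.internals = n},
    MTree.hookProd1 (fun h =>
      C ((((m : ℚ) - 1) * (h : ℚ))⁻¹) *
        (C ((m : ℚ) * (h : ℚ) - 1) * (X : ℚ[X]) - C ((h : ℚ) - 1))) T

/-!
Deleting the root of a tree in `𝒯_{n,m}` leaves an `m`-tuple of subtrees with
`i₁ + ⋯ + i_m = n - 1` internal vertices, and this is a bijection onto such tuples of trees.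
The root's hook length is `i₁ + ⋯ + i_{m-1} + 1`, and every other vertex keeps its hook length
inside its subtree, so the weighted sum over `𝒯_{n,m}` factors as the root weight times the
product of the weighted sums over the subtrees. At hook length `h` the weight splits as
`(mx - 1)/(m - 1) + (1 - x)/((m - 1)h)`.
-/

namespace MTree

variable {m : ℕ}

theorem node_injective : Function.Injective (node : (Fin m → MTree m) → MTree m) :=
  fun _ _ h => node.inj h

theorem internals_lt_node (c : Fin m → MTree m) (i : Fin m) :
    (c i).internals < (node c).internals := by
  rw [internals, Nat.one_add, Nat.lt_succ_iff]
  exact Finset.single_le_sum (fun j _ => Nat.zero_le (c j).internals) (Finset.mem_univ i)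

theorem finite_setOf_internals_le (n : ℕ) : {T : MTree m | T.internals ≤ n}.Finite := by
  induction n with
  | zero =>
    refine (Set.finite_singleton leaf).subset fun T hT => ?_
    cases T with
    | leaf => rfl
    | node c => simp [internals] at hT
  | succ n ih =>
    refine ((Set.Finite.pi fun _ : Fin m => ih).image node).insert leaf |>.subset fun T hT => ?_
    cases T with
    | leaf => exact Set.mem_insert _ _
    | node c =>
      exact Set.mem_insert_of_mem _
        ⟨c, fun i _ => Nat.lt_succ_iff.mp ((internals_lt_node c i).trans_le hT), rfl⟩

theorem finite_setOf_internals_eq (n : ℕ) : {T : MTree m | T.internals = n}.Finite :=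
  (finite_setOf_internals_le n).subset fun _ h => h.le

/-- The trees of `𝒯_{n,m}`. -/
noncomputable def ofInternals (m n : ℕ) : Finset (MTree m) :=
  (finite_setOf_internals_eq n).toFinset

@[simp]
theorem mem_ofInternals {n : ℕ} {T : MTree m} : T ∈ ofInternals m n ↔ T.internals = n :=
  Set.Finite.mem_toFinset _

theorem pairwiseDisjoint_map_piFinset_ofInternals (s : Set (Fin m → ℕ)) :
    s.PairwiseDisjoint fun t =>
      (Fintype.piFinset fun i => ofInternals m (t i)).map ⟨node, node_injective⟩ := by
  intro t _ t' _ hne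
  refine Finset.disjoint_left.2 fun T hT hT' => hne ?_
  obtain ⟨c, hc, rfl⟩ := Finset.mem_map.1 hT
  obtain ⟨c', hc', hcc'⟩ := Finset.mem_map.1 hT'
  obtain rfl : c' = c := node_injective hcc'
  funext i
  rw [← mem_ofInternals.1 (Fintype.mem_piFinset.1 hc i),
    ← mem_ofInternals.1 (Fintype.mem_piFinset.1 hc' i)]

theorem ofInternals_succ (k : ℕ) :
    ofInternals m (k + 1) =
      (Finset.Nat.antidiagonalTuple m k).disjiUnion
        (fun t => (Fintype.piFinset fun i => ofInternals m (t i)).map ⟨node, node_injective⟩)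
        (pairwiseDisjoint_map_piFinset_ofInternals _) := by
  ext T
  simp only [mem_ofInternals, Finset.mem_disjiUnion, Finset.mem_map, Fintype.mem_piFinset,
    Finset.Nat.mem_antidiagonalTuple, Function.Embedding.coeFn_mk]
  constructor
  · intro hT
    cases T with
    | leaf => simp [internals] at hT
    | node c =>
      rw [internals] at hT
      exact ⟨fun i => (c i).internals, by simp only; omega, c, fun _ => rfl, rfl⟩
  · rintro ⟨t, ht, c, hc, rfl⟩
    simp only [internals, hc, ht]
    omega

theorem hook1_eq_of_internals {c : Fin m → MTree m} {t : Fin m → ℕ}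
    (hc : ∀ i, (c i).internals = t i) :
    hook1 c = 1 + ∑ j ∈ Finset.univ.filter (fun j : Fin m => (j : ℕ) + 1 < m), t j := by
  simp only [hook1, hc]

theorem sum_ofInternals_succ_hookProd1 {R : Type*} [CommSemiring R] (f : ℕ → R) (k : ℕ) :
    ∑ T ∈ ofInternals m (k + 1), hookProd1 f T =
      ∑ t ∈ Finset.Nat.antidiagonalTuple m k,
        f (1 + ∑ j ∈ Finset.univ.filter (fun j : Fin m => (j : ℕ) + 1 < m), t j) *
          ∏ j, ∑ T ∈ ofInternals m (t j), hookProd1 f T := by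
  rw [ofInternals_succ, Finset.sum_disjiUnion]
  refine Finset.sum_congr rfl fun t _ => ?_
  rw [Finset.sum_map, Finset.prod_univ_sum, Finset.mul_sum]
  refine Finset.sum_congr rfl fun c hc => ?_
  have hc : ∀ i, (c i).internals = t i := fun i => mem_ofInternals.1 (Fintype.mem_piFinset.1 hc i)
  simp only [Function.Embedding.coeFn_mk, hookProd1, hook1_eq_of_internals hc]

end MTree

noncomputable def hookWeight (m h : ℕ) : ℚ[X] :=
  C ((((m : ℚ) - 1) * (h : ℚ))⁻¹) * (C ((m : ℚ) * (h : ℚ) - 1) * X - C ((h : ℚ) - 1))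

theorem hookPoly_eq_sum (m n : ℕ) :
    hookPoly m n = ∑ T ∈ MTree.ofInternals m n, MTree.hookProd1 (hookWeight m) T := by
  rw [hookPoly, ← Set.Finite.coe_toFinset (MTree.finite_setOf_internals_eq n),
    finsum_mem_coe_finset]
  rfl

theorem hookWeight_one_add (m s : ℕ) :
    hookWeight m (1 + s) =
      C (((m : ℚ) - 1)⁻¹) * (C (m : ℚ) * X - 1) +
        C ((((m : ℚ) - 1) * ((s : ℚ) + 1))⁻¹) * (1 - X) := by
  have hh : C ((s : ℚ) + 1)⁻¹ * C ((s : ℚ) + 1) = 1 := by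
    rw [← C_mul, inv_mul_cancel₀ (by positivity), C_1]
  rw [hookWeight, Nat.cast_add, Nat.cast_one, add_comm (1 : ℚ)]
  simp only [mul_inv, C_mul, C_sub, C_1]
  linear_combination C ((m : ℚ) - 1)⁻¹ * (C (m : ℚ) * X - 1) * hh

theorem hookPoly_recurrence_general (m : ℕ) :
    ∀ n : ℕ, 1 ≤ n →
      hookPoly m n =
        ∑ t ∈ Finset.Nat.antidiagonalTuple m (n - 1),
          (C (((m : ℚ) - 1)⁻¹) * (C (m : ℚ) * (X : ℚ[X]) - 1) +
            C ((((m : ℚ) - 1) *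
                ((∑ j ∈ Finset.univ.filter (fun j : Fin m => (j : ℕ) + 1 < m),
                    t j : ℕ) + 1 : ℚ))⁻¹) * (1 - (X : ℚ[X]))) *
            ∏ j : Fin m, hookPoly m (t j) := by
  intro n hn
  obtain ⟨k, rfl⟩ : ∃ k, n = k + 1 := ⟨n - 1, (Nat.sub_add_cancel hn).symm⟩
  simp only [hookPoly_eq_sum, MTree.sum_ofInternals_succ_hookProd1, hookWeight_one_add,
    Nat.add_sub_cancel]

/-- **Recurrence for the hook length polynomials.**  For `m ≥ 2` and `n ≥ 1`,
`𝓗_{n,m}(x) = Σ_{i₁+⋯+i_m = n-1}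
  ((mx-1)/(m-1) + (1-x)/((m-1)(i₁+⋯+i_{m-1}+1))) ∏_{j=1}^m 𝓗_{i_j,m}(x)`,
the sum being over all `m`-tuples of nonnegative integers summing to `n-1`. -/
theorem hookPoly_recurrence (m : ℕ) (hm : 2 ≤ m) :
    ∀ n : ℕ, 1 ≤ n →
      hookPoly m n =
        ∑ t ∈ Finset.Nat.antidiagonalTuple m (n - 1),
          (C (((m : ℚ) - 1)⁻¹) * (C (m : ℚ) * (X : ℚ[X]) - 1) +
            C ((((m : ℚ) - 1) *
                ((∑ j ∈ Finset.univ.filter (fun j : Fin m => (j : ℕ) + 1 < m),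
                    t j : ℕ) + 1 : ℚ))⁻¹) * (1 - (X : ℚ[X]))) *
            ∏ j : Fin m, hookPoly m (t j) :=
  hookPoly_recurrence_general m
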